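/- Let α ∈ (0, 1), K > 0 and 0 < |θ₀| < π, and let θ : [0, T) → ℝ be differentiable with θ(0) = θ₀, θ(t) ∈ (−π, π) ∖ {0} and θ̇(t) = −K·sin θ(t)/|θ(t)|^{2α} for all t ∈ [0, T), and suppose T is maximal, i.e. θ admits no extension as such a solution to a strictly larger interval. Then for all t ∈ [0, T): |θ₀|^{2α} − 2Kα·t ≤ |θ(t)|^{2α} ≤ |θ₀|^{2α} − 2Kα·(sin|θ₀|/|θ₀|)·t; moreover T is finite with t_min ≤ T ≤ t_max, where t_min = |θ₀|^{2α}/(2Kα) and t_max = |θ₀|^{2α+1}/(2Kα·sin|θ₀|), and θ(t) → 0 as t → T. In particular, two identical oscillators confined to a half circle exhibit finite-time phase synchronization. -/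

import Mathlib

open Real Set Filter Topology
open scoped ENNReal

/-- The time domain `[0, T)` for a (possibly infinite) final time `T ∈ [0, ∞]`. -/
def domSet (T : ℝ≥0∞) : Set ℝ := {t : ℝ | 0 ≤ t ∧ ENNReal.ofReal t < T}

/-- A solution of the two-oscillator relative phase equation
`θ̇ = −K·sin θ/|θ|^{2α}` on `[0, T)` with `θ(0) = θ₀`, confined to `(−π, π) ∖ {0}`. -/
def IsTwoOscSol (K α θ₀ : ℝ) (T : ℝ≥0∞) (θ : ℝ → ℝ) : Prop :=
  θ 0 = θ₀ ∧ ∀ t ∈ domSet T,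
    (θ t ∈ Set.Ioo (-Real.pi) Real.pi ∧ θ t ≠ 0) ∧
    HasDerivWithinAt θ (-K * Real.sin (θ t) / |θ t| ^ (2 * α)) (domSet T) t

lemma abs_rpow_two_mul (α x : ℝ) : |x| ^ (2 * α) = (x ^ 2) ^ α := by
  rw [← sq_abs, ← Real.rpow_natCast |x| 2, ← Real.rpow_mul (abs_nonneg x)]
  norm_num

lemma hasDerivAt_sq_rpow (α : ℝ) {x : ℝ} (hx : x ≠ 0) :
    HasDerivAt (fun x : ℝ => (x ^ 2) ^ α) (α * (x ^ 2) ^ (α - 1) * (2 * x)) x := by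
  have h1 : HasDerivAt (fun x : ℝ => x ^ 2) (2 * x) x := by
    simpa [mul_comm] using hasDerivAt_pow 2 x
  have h2 : HasDerivAt (fun u : ℝ => u ^ α) (α * (x ^ 2) ^ (α - 1)) (x ^ 2) :=
    Real.hasDerivAt_rpow_const (Or.inl (pow_ne_zero 2 hx))
  have := HasDerivAt.comp (h₂ := fun u : ℝ => u ^ α) (h := fun x : ℝ => x ^ 2) x h2 h1
  simpa [Function.comp_def] using this

lemma sin_div_self_eq_abs {x : ℝ} (hx : x ≠ 0) : Real.sin x / x = Real.sin |x| / |x| := by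
  rcases hx.lt_or_gt with h | h
  · rw [abs_of_neg h, Real.sin_neg, neg_div_neg_eq]
  · rw [abs_of_pos h]

lemma sin_div_anti {x y : ℝ} (hx : 0 < x) (hxy : x ≤ y) (hy : y < Real.pi) :
    Real.sin y / y ≤ Real.sin x / x := by
  rcases eq_or_lt_of_le hxy with rfl | hxy
  · exact le_refl _
  have h0y : 0 < y := hx.trans hxy
  have key : x / y * Real.sin y ≤ Real.sin x := by
    have hmem0 : (0:ℝ) ∈ Icc 0 Real.pi := ⟨le_rfl, Real.pi_pos.le⟩
    have hmemy : y ∈ Icc 0 Real.pi := ⟨h0y.le, hy.le⟩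
    have ha : (0:ℝ) ≤ 1 - x / y := by
      rw [sub_nonneg]; exact div_le_one_of_le₀ hxy.le h0y.le
    have hb : (0:ℝ) ≤ x / y := by positivity
    have hab : (1 - x / y) + x / y = 1 := by ring
    have := strictConcaveOn_sin_Icc.concaveOn.2 hmem0 hmemy ha hb hab
    simp only [smul_eq_mul, Real.sin_zero, mul_zero, zero_add, add_zero] at this
    rwa [div_mul_cancel₀ _ h0y.ne'] at this
  rw [div_le_div_iff₀ h0y hx]
  calc Real.sin y * x = (x / y * Real.sin y) * y := by field_simp
    _ ≤ Real.sin x * y := mul_le_mul_of_nonneg_right key h0y.le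

lemma domSet_eq_Ico {T : ℝ≥0∞} (hT : T ≠ ⊤) : domSet T = Ico 0 T.toReal := by
  ext t
  simp only [domSet, mem_setOf_eq, mem_Ico, and_congr_right_iff]
  intro ht
  exact ENNReal.ofReal_lt_iff_lt_toReal ht hT

lemma domSet_top : domSet ⊤ = Ici 0 := by
  ext t; simp [domSet]

lemma convex_domSet (T : ℝ≥0∞) : Convex ℝ (domSet T) := by
  rcases eq_or_ne T ⊤ with rfl | hT
  · rw [domSet_top]; exact convex_Ici 0
  · rw [domSet_eq_Ico hT]; exact convex_Ico 0 T.toReal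

set_option maxHeartbeats 2000000 in
/-- two identical oscillators confined to the half circle exhibit finite-time
phase synchronization, with explicit two-sided bounds on `|θ|^{2α}` and on the maximal
existence time. -/
theorem statement12 (K α θ₀ : ℝ) (hK : 0 < K) (hα : α ∈ Ioo (0 : ℝ) 1)
    (hθ₀ : 0 < |θ₀|) (hθ₀' : |θ₀| < Real.pi)
    (T : ℝ≥0∞) (hT : 0 < T) (θ : ℝ → ℝ)
    (hsol : IsTwoOscSol K α θ₀ T θ)
    (hmax : ¬ ∃ T' : ℝ≥0∞, T < T' ∧ ∃ θ' : ℝ → ℝ,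
      (∀ t ∈ domSet T, θ' t = θ t) ∧ IsTwoOscSol K α θ₀ T' θ') :
    (∀ t ∈ domSet T,
      |θ₀| ^ (2 * α) - 2 * K * α * t ≤ |θ t| ^ (2 * α) ∧
      |θ t| ^ (2 * α) ≤ |θ₀| ^ (2 * α) - 2 * K * α * (Real.sin |θ₀| / |θ₀|) * t) ∧
    T ≠ ⊤ ∧
    ENNReal.ofReal (|θ₀| ^ (2 * α) / (2 * K * α)) ≤ T ∧
    T ≤ ENNReal.ofReal (|θ₀| ^ (2 * α + 1) / (2 * K * α * Real.sin |θ₀|)) ∧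
    Tendsto θ (nhdsWithin T.toReal (Iio T.toReal)) (nhds 0) := by
  obtain ⟨hα0, hα1⟩ := hα
  obtain ⟨hθini, hsol'⟩ := hsol
  have h2α : (0:ℝ) < 2 * α := by linarith
  have hKA : (0:ℝ) < 2 * K * α := by positivity
  set D := domSet T with hDdef
  have h0D : (0:ℝ) ∈ D := ⟨le_rfl, by simpa using hT⟩
  set c : ℝ := Real.sin |θ₀| / |θ₀| with hcdef
  have hsin0 : 0 < Real.sin |θ₀| := Real.sin_pos_of_pos_of_lt_pi hθ₀ hθ₀'
  have hcpos : 0 < c := div_pos hsin0 hθ₀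
  set y : ℝ → ℝ := fun t => (θ t ^ 2) ^ α with hydef
  have hyabs : ∀ t, |θ t| ^ (2*α) = y t := fun t => abs_rpow_two_mul α (θ t)
  have hθ0abs : |θ 0| = |θ₀| := by rw [hθini]
  have hy0 : |θ₀| ^ (2*α) = y 0 := by rw [← hθ0abs, hyabs 0]
  have hθD : ∀ t ∈ D, θ t ∈ Ioo (-π) π ∧ θ t ≠ 0 := fun t ht => (hsol' t ht).1
  set v : ℝ → ℝ := fun x => -K * Real.sin x / |x| ^ (2*α) with hvdef
  have hderiv : ∀ t ∈ D, HasDerivWithinAt θ (v (θ t)) D t := fun t ht => (hsol' t ht).2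
  have hq_eq : ∀ t ∈ D, Real.sin (θ t) / θ t = Real.sin |θ t| / |θ t| := fun t ht =>
    sin_div_self_eq_abs (hθD t ht).2
  have habs_lt : ∀ t ∈ D, 0 < |θ t| ∧ |θ t| < π := by
    intro t ht
    obtain ⟨⟨h1, h2⟩, h3⟩ := hθD t ht
    exact ⟨abs_pos.mpr h3, abs_lt.mpr ⟨h1, h2⟩⟩
  have hqpos : ∀ t ∈ D, 0 < Real.sin (θ t) / θ t := by
    intro t ht
    rw [hq_eq t ht]
    obtain ⟨h1, h2⟩ := habs_lt t ht
    exact div_pos (Real.sin_pos_of_pos_of_lt_pi h1 h2) h1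
  have hqle : ∀ t ∈ D, Real.sin (θ t) / θ t ≤ 1 := by
    intro t ht
    rw [hq_eq t ht]
    obtain ⟨h1, _⟩ := habs_lt t ht
    exact div_le_one_of_le₀ (Real.sin_le h1.le) h1.le
  -- derivative of y
  have hyd : ∀ t ∈ D, HasDerivWithinAt y (-(2*K*α) * (Real.sin (θ t) / θ t)) D t := by
    intro t ht
    have hne := (hθD t ht).2
    have hF := hasDerivAt_sq_rpow α hne
    have hc := HasDerivAt.comp_hasDerivWithinAt t hF (hderiv t ht)
    have hsq : (0:ℝ) < θ t ^ 2 := by positivity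
    have hA : (0:ℝ) < (θ t ^ 2) ^ α := Real.rpow_pos_of_pos hsq α
    have heq : α * (θ t ^ 2) ^ (α - 1) * (2 * θ t) * (v (θ t))
        = -(2*K*α) * (Real.sin (θ t) / θ t) := by
      simp only [hvdef]
      rw [abs_rpow_two_mul α (θ t), Real.rpow_sub hsq, Real.rpow_one]
      field_simp
    rw [heq] at hc
    exact hc
  have hcont : ContinuousOn y D := fun t ht => (hyd t ht).continuousWithinAt
  have hlinDeriv : ∀ (a u : ℝ), HasDerivAt (fun t : ℝ => a * t) a u := by
    intro a u; simpa using (hasDerivAt_id u).const_mul a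
  -- y is antitone
  have hanti : AntitoneOn y D := by
    refine antitoneOn_of_hasDerivWithinAt_nonpos
      (f' := fun u => -(2*K*α) * (Real.sin (θ u) / θ u)) (convex_domSet T) hcont
      (fun u hu => (hyd u (interior_subset hu)).mono interior_subset) ?_
    intro u hu
    have := hqpos u (interior_subset hu)
    nlinarith
  -- lower bound
  have hlow : ∀ t ∈ D, y 0 - 2*K*α*t ≤ y t := by
    have hmono : MonotoneOn (fun t => y t + 2*K*α*t) D := by
      refine monotoneOn_of_hasDerivWithinAt_nonneg
        (f' := fun u => -(2*K*α) * (Real.sin (θ u) / θ u) + 2*K*α) (convex_domSet T)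
        (hcont.add (continuous_const.mul continuous_id).continuousOn) ?_ ?_
      · intro u hu
        exact ((hyd u (interior_subset hu)).mono interior_subset).add
          ((hlinDeriv (2*K*α) u).hasDerivWithinAt)
      · intro u hu
        have := hqle u (interior_subset hu)
        nlinarith
    intro t ht
    have := hmono h0D ht ht.1
    simp only [mul_zero, add_zero] at this
    linarith
  -- |θ t| ≤ |θ₀|
  have habs_le : ∀ t ∈ D, |θ t| ≤ |θ₀| := by
    intro t ht
    by_contra hcon
    push_neg at hcon
    have h1 : y 0 < y t := by
      have h2 := Real.rpow_lt_rpow (abs_nonneg θ₀) hcon h2α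
      rwa [hyabs t, hy0] at h2
    have h2 : y t ≤ y 0 := hanti h0D ht ht.1
    linarith
  have hqge : ∀ t ∈ D, c ≤ Real.sin (θ t) / θ t := by
    intro t ht
    rw [hq_eq t ht, hcdef]
    exact sin_div_anti (habs_lt t ht).1 (habs_le t ht) hθ₀'
  -- upper bound
  have hup : ∀ t ∈ D, y t ≤ y 0 - 2*K*α*c*t := by
    have hanti2 : AntitoneOn (fun t => y t + 2*K*α*c*t) D := by
      refine antitoneOn_of_hasDerivWithinAt_nonpos
        (f' := fun u => -(2*K*α) * (Real.sin (θ u) / θ u) + 2*K*α*c) (convex_domSet T)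
        (hcont.add (continuous_const.mul continuous_id).continuousOn) ?_ ?_
      · intro u hu
        exact ((hyd u (interior_subset hu)).mono interior_subset).add
          ((hlinDeriv (2*K*α*c) u).hasDerivWithinAt)
      · intro u hu
        have := hqge u (interior_subset hu)
        nlinarith
    intro t ht
    have := hanti2 h0D ht ht.1
    simp only [mul_zero, add_zero] at this
    linarith
  have hpart1 : ∀ t ∈ D,
      |θ₀| ^ (2 * α) - 2 * K * α * t ≤ |θ t| ^ (2 * α) ∧
      |θ t| ^ (2 * α) ≤ |θ₀| ^ (2 * α) - 2 * K * α * c * t := by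
    intro t ht
    rw [hyabs t, hy0]
    exact ⟨hlow t ht, hup t ht⟩
  -- positivity of y on D
  have hypos : ∀ t ∈ D, 0 < y t := by
    intro t ht
    have h1 : (0:ℝ) < |θ t| ^ (2*α) := Real.rpow_pos_of_pos (habs_lt t ht).1 _
    rwa [hyabs t] at h1
  set tmax : ℝ := |θ₀| ^ (2 * α + 1) / (2 * K * α * Real.sin |θ₀|) with htmaxdef
  have htmaxpos : 0 < tmax := by
    rw [htmaxdef]
    exact div_pos (Real.rpow_pos_of_pos hθ₀ _) (mul_pos hKA hsin0)
  have hcKA : (0:ℝ) < 2*K*α*c := mul_pos hKA hcpos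
  have htmax_eq : y 0 / (2*K*α*c) = tmax := by
    rw [htmaxdef, ← hy0, hcdef,
      show |θ₀| ^ (2*α+1) = |θ₀| ^ (2*α) * |θ₀| by rw [Real.rpow_add hθ₀, Real.rpow_one]]
    field_simp
  have hlt_tmax : ∀ t ∈ D, t < tmax := by
    intro t ht
    have h1 := hypos t ht
    have h2 := hup t ht
    rw [← htmax_eq, lt_div_iff₀ hcKA]
    nlinarith
  have hTle : T ≤ ENNReal.ofReal tmax := by
    by_contra hcon
    push_neg at hcon
    have hmem : tmax ∈ D := ⟨htmaxpos.le, hcon⟩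
    exact absurd (hlt_tmax tmax hmem) (lt_irrefl tmax)
  have hTne : T ≠ ⊤ := by
    intro h
    rw [h] at hTle
    exact absurd (top_le_iff.mp hTle) ENNReal.ofReal_ne_top
  set b := T.toReal with hbdef
  have hb : 0 < b := ENNReal.toReal_pos hT.ne' hTne
  have hDico : D = Ico 0 b := domSet_eq_Ico hTne
  have hmemD : ∀ u ∈ Ioo (0:ℝ) b, u ∈ D := fun u hu => by
    rw [hDico]; exact ⟨hu.1.le, hu.2⟩
  -- the limit L of y at b⁻
  have hIoo : (Ioo (0:ℝ) b).Nonempty := nonempty_Ioo.mpr hb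
  have hbddb : BddBelow (y '' Ioo 0 b) := by
    refine ⟨0, ?_⟩
    rintro z ⟨u, hu, rfl⟩
    exact Real.rpow_nonneg (sq_nonneg _) α
  set L := sInf (y '' Ioo 0 b) with hLdef
  have hytend : Tendsto y (𝓝[<] b) (𝓝 L) :=
    AntitoneOn.tendsto_nhdsWithin_Ioo_left hIoo
      (fun u hu w hw huw => hanti (hmemD u hu) (hmemD w hw) huw) hbddb
  have hL0 : 0 ≤ L := by
    refine le_csInf (hIoo.image y) ?_
    rintro z ⟨u, hu, rfl⟩
    exact Real.rpow_nonneg (sq_nonneg _) α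
  have hLle : ∀ u ∈ Ioo (0:ℝ) b, L ≤ y u := fun u hu => csInf_le hbddb ⟨u, hu, rfl⟩
  have hLlow : y 0 - 2*K*α*b ≤ L := by
    refine le_csInf (hIoo.image y) ?_
    rintro z ⟨u, hu, rfl⟩
    have h1 := hlow u (hmemD u hu)
    nlinarith [hu.2.le, hKA]
  have hyroot : ∀ t, (y t) ^ (2*α)⁻¹ = |θ t| := by
    intro t
    rw [← hyabs t, ← Real.rpow_mul (abs_nonneg (θ t)), mul_inv_cancel₀ h2α.ne', Real.rpow_one]
  -- the key: L = 0, otherwise we can extend the solution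
  have hLzero : L = 0 := by
    by_contra hLne
    have hLpos : 0 < L := hL0.lt_of_ne (Ne.symm hLne)
    set δ := L ^ (2*α)⁻¹ with hδdef
    have hδpos : 0 < δ := Real.rpow_pos_of_pos hLpos _
    have habs_tend : Tendsto (fun t => |θ t|) (𝓝[<] b) (𝓝 δ) := by
      have hcontr : ContinuousAt (fun z : ℝ => z ^ (2*α)⁻¹) L :=
        Real.continuousAt_rpow_const L _ (Or.inl hLpos.ne')
      exact (hcontr.tendsto.comp hytend).congr hyroot
    have hδle : δ ≤ |θ₀| := by
      have h1 : L ≤ y 0 := by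
        obtain ⟨u, hu⟩ := hIoo
        exact (hLle u hu).trans (hanti h0D (hmemD u hu) hu.1.le)
      calc δ = L ^ (2*α)⁻¹ := rfl
        _ ≤ (y 0) ^ (2*α)⁻¹ := Real.rpow_le_rpow hL0 h1 (by positivity)
        _ = |θ 0| := hyroot 0
        _ = |θ₀| := hθ0abs
    have hδπ : δ < π := lt_of_le_of_lt hδle hθ₀'
    set s : ℝ := if 0 < θ 0 then 1 else -1 with hsdef
    have hs : s = 1 ∨ s = -1 := by rw [hsdef]; split <;> simp
    have hsign : ∀ t ∈ D, θ t = s * |θ t| := by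
      intro t ht
      have hprod : 0 < θ 0 * θ t := by
        by_contra hnp
        push_neg at hnp
        have hne0 := (hθD 0 h0D).2
        have hnet := (hθD t ht).2
        have hlt : θ 0 * θ t < 0 := lt_of_le_of_ne hnp (mul_ne_zero hne0 hnet)
        have hsub : uIcc (0:ℝ) t ⊆ D := by
          rw [uIcc_of_le ht.1]
          intro u hu
          exact ⟨hu.1, lt_of_le_of_lt (ENNReal.ofReal_le_ofReal hu.2) ht.2⟩
        have hcontθ : ContinuousOn θ (uIcc 0 t) :=
          fun u hu => ((hderiv u (hsub hu)).continuousWithinAt).mono hsub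
        have h0mem : (0:ℝ) ∈ uIcc (θ 0) (θ t) := by
          rw [mem_uIcc]
          rcases mul_neg_iff.mp hlt with ⟨hp, hn⟩ | ⟨hn, hp⟩
          · exact Or.inr ⟨hn.le, hp.le⟩
          · exact Or.inl ⟨hn.le, hp.le⟩
        obtain ⟨u, hu, hu0⟩ := intermediate_value_uIcc hcontθ h0mem
        exact (hθD u (hsub hu)).2 hu0
      rcases lt_trichotomy (θ 0) 0 with h0 | h0 | h0
      · have hts : θ t < 0 := by nlinarith
        rw [hsdef, if_neg (not_lt.mpr h0.le), abs_of_neg hts]; ring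
      · exact absurd h0 (hθD 0 h0D).2
      · have hts : 0 < θ t := by nlinarith
        rw [hsdef, if_pos h0, abs_of_pos hts]; ring
    set c₀ := s * δ with hc0def
    have hc0abs : |c₀| = δ := by
      rcases hs with h | h <;> rw [hc0def, h] <;>
        simp [abs_of_pos hδpos, abs_of_nonneg hδpos.le]
    have hc0ne : c₀ ≠ 0 := by
      intro h
      rw [h, abs_zero] at hc0abs
      exact hδpos.ne' hc0abs.symm
    have hc0π : |c₀| < π := by rw [hc0abs]; exact hδπ
    have hθtend : Tendsto θ (𝓝[<] b) (𝓝 c₀) := by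
      have h1 : Tendsto (fun t => s * |θ t|) (𝓝[<] b) (𝓝 (s * δ)) := habs_tend.const_mul s
      refine Tendsto.congr' ?_ h1
      filter_upwards [Ioo_mem_nhdsLT_of_mem (⟨hb, le_rfl⟩ : b ∈ Ioc 0 b)] with u hu
      exact (hsign u (hmemD u hu)).symm
    have hveq : v = fun x : ℝ => -K * Real.sin x / (x^2) ^ α := by
      funext x
      rw [hvdef]
      simp only [abs_rpow_two_mul]
    have hvc : ContDiffAt ℝ 1 v c₀ := by
      rw [hveq]
      refine ContDiffAt.div ?_ ?_ ?_
      · exact (contDiff_const.mul Real.contDiff_sin).contDiffAt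
      · have hg : ContDiffAt ℝ 1 (fun u : ℝ => u ^ α) (c₀ ^ 2) :=
          Real.contDiffAt_rpow_const_of_ne (pow_ne_zero 2 hc0ne)
        have hfc : ContDiffAt ℝ 1 (fun x : ℝ => x ^ 2) c₀ := by
          exact (contDiff_id.pow 2).contDiffAt
        have := ContDiffAt.comp (g := fun u : ℝ => u ^ α) (f := fun x : ℝ => x ^ 2) c₀ hg hfc
        simpa [Function.comp_def] using this
      · exact (Real.rpow_pos_of_pos (by positivity) α).ne'
    obtain ⟨f, hfb, ε, hε, hf⟩ := hvc.exists_forall_mem_closedBall_exists_eq_forall_mem_Ioo_hasDerivAt₀ b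
    have hfc : ContinuousAt f b := (hf b ⟨by linarith, by linarith⟩).continuousAt
    set r := min δ (π - δ) / 2 with hrdef
    have hrpos : 0 < r := by
      rw [hrdef]
      exact div_pos (lt_min hδpos (by linarith)) two_pos
    have hrδ : r < δ := by
      have h1 : min δ (π - δ) ≤ δ := min_le_left _ _
      rw [hrdef]; linarith
    have hrπ : δ + r < π := by
      have h1 : min δ (π - δ) ≤ π - δ := min_le_right _ _
      rw [hrdef]; linarith
    obtain ⟨ε'', hε''pos, hε''⟩ := Metric.continuousAt_iff.mp hfc r hrpos
    set ε' := min ε ε'' / 2 with hε'def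
    have hε'pos : 0 < ε' := by
      rw [hε'def]
      exact div_pos (lt_min hε hε''pos) two_pos
    have hε'ε : ε' < ε := by
      have h1 : min ε ε'' ≤ ε := min_le_left _ _
      rw [hε'def]; linarith
    have hε'ε'' : ε' < ε'' := by
      have h1 : min ε ε'' ≤ ε'' := min_le_right _ _
      rw [hε'def]; linarith
    have hfmem : ∀ u ∈ Icc b (b + ε'), f u ∈ Ioo (-π) π ∧ f u ≠ 0 := by
      intro u hu
      have hd : dist u b < ε'' := by
        rw [Real.dist_eq, abs_of_nonneg (by linarith [hu.1])]
        linarith [hu.2]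
      have h1 : dist (f u) (f b) < r := hε'' hd
      rw [hfb, Real.dist_eq] at h1
      have h2 : |f u| < δ + r := by
        have h4 := abs_sub_abs_le_abs_sub (f u) c₀
        rw [hc0abs] at h4
        linarith
      have h3 : 0 < |f u| := by
        have h4 := abs_sub_abs_le_abs_sub c₀ (f u)
        rw [abs_sub_comm] at h4
        rw [hc0abs] at h4
        linarith
      exact ⟨abs_lt.mp (by linarith), abs_pos.mp h3⟩
    set b' := b + ε' with hb'def
    have hb'pos : 0 < b' := by rw [hb'def]; linarith
    set T' := ENNReal.ofReal b' with hT'def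
    have hD'ico : domSet T' = Ico 0 b' := by
      rw [hT'def, domSet_eq_Ico ENNReal.ofReal_ne_top, ENNReal.toReal_ofReal hb'pos.le]
    have hTT' : T < T' := by
      calc T = ENNReal.ofReal b := (ENNReal.ofReal_toReal hTne).symm
        _ < T' := by
            rw [hT'def]
            exact (ENNReal.ofReal_lt_ofReal_iff hb'pos).mpr (by rw [hb'def]; linarith)
    set θ' : ℝ → ℝ := fun u => if u < b then θ u else f u with hθ'def
    have hθ'lt : ∀ z, z < b → θ' z = θ z := by
      intro z hz; simp only [hθ'def]; rw [if_pos hz]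
    have hθ'ge : ∀ z, b ≤ z → θ' z = f z := by
      intro z hz; simp only [hθ'def]; rw [if_neg (not_lt.mpr hz)]
    have hθ'agree : ∀ u ∈ D, θ' u = θ u := by
      intro u hu
      rw [hDico] at hu
      exact hθ'lt u hu.2
    have hθ'b : θ' b = c₀ := by rw [hθ'ge b le_rfl, hfb]
    have hder' : ∀ w ∈ Ioo (0:ℝ) b, HasDerivAt θ' (v (θ w)) w := by
      intro w hw
      have hwD : w ∈ D := hmemD w hw
      have hDnhds : D ∈ 𝓝 w := by rw [hDico]; exact Ico_mem_nhds hw.1 hw.2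
      have hdw : HasDerivAt θ (v (θ w)) w := (hderiv w hwD).hasDerivAt hDnhds
      refine hdw.congr_of_eventuallyEq ?_
      filter_upwards [Iio_mem_nhds hw.2] with z hz
      exact hθ'lt z hz
    -- the contradiction
    refine hmax ⟨T', hTT', θ', hθ'agree, ?_, ?_⟩
    · rw [hθ'agree 0 h0D, hθini]
    · intro u hu
      rw [hD'ico] at hu
      rcases lt_or_ge u b with hub | hub
      · have huD : u ∈ D := by rw [hDico]; exact ⟨hu.1, hub⟩
        have he : θ' u = θ u := hθ'lt u hub
        refine ⟨by rw [he]; exact hθD u huD, ?_⟩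
        have hset : domSet T' =ᶠ[𝓝 u] D := by
          rw [Filter.eventuallyEq_set]
          filter_upwards [Iio_mem_nhds hub] with w hw
          rw [hD'ico, hDico]
          constructor
          · intro h; exact ⟨h.1, hw⟩
          · intro h
            refine ⟨h.1, ?_⟩
            have : b ≤ b' := by rw [hb'def]; linarith
            exact lt_of_lt_of_le hw this
        have hd1 : HasDerivWithinAt θ' (v (θ u)) D u :=
          (hderiv u huD).congr (fun w hw => hθ'agree w hw) he
        rw [he]
        exact (hasDerivWithinAt_congr_set hset).mpr hd1
      · have hu2 : u < b + ε' := by have := hu.2; rwa [hb'def] at this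
        have hu' : u ∈ Icc b (b + ε') := ⟨hub, hu2.le⟩
        have he : θ' u = f u := hθ'ge u hub
        refine ⟨by rw [he]; exact hfmem u hu', ?_⟩
        rcases eq_or_lt_of_le hub with heq | hub'
        · -- u = b
          subst heq
          rw [hθ'b]
          have HL : HasDerivWithinAt θ' (v c₀) (Iic b) b := by
            refine hasDerivWithinAt_Iic_of_tendsto_deriv (s := Ioo 0 b) ?_ ?_ ?_ ?_
            · intro w hw
              exact (hder' w hw).differentiableAt.differentiableWithinAt
            · have h1 : Tendsto θ' (𝓝[Ioo 0 b] b) (𝓝 c₀) := by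
                refine Tendsto.congr' ?_
                  (hθtend.mono_left (nhdsWithin_mono b Ioo_subset_Iio_self))
                filter_upwards [self_mem_nhdsWithin] with z hz
                exact (hθ'lt z hz.2).symm
              show Tendsto θ' (𝓝[Ioo 0 b] b) (𝓝 (θ' b))
              rw [hθ'b]
              exact h1
            · exact Ioo_mem_nhdsLT_of_mem ⟨hb, le_rfl⟩
            · have h1 : Tendsto (fun w => v (θ w)) (𝓝[<] b) (𝓝 (v c₀)) :=
                (hvc.continuousAt.tendsto).comp hθtend
              refine Tendsto.congr' ?_ h1
              filter_upwards [Ioo_mem_nhdsLT_of_mem (⟨hb, le_rfl⟩ : b ∈ Ioc 0 b)] with w hw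
              exact ((hder' w hw).deriv).symm
          have HR : HasDerivWithinAt θ' (v c₀) (Ici b) b := by
            have hdf : HasDerivAt f (v (f b)) b := hf b ⟨by linarith, by linarith⟩
            rw [hfb] at hdf
            exact (hdf.hasDerivWithinAt).congr (fun z hz => hθ'ge z hz) (hθ'ge b le_rfl)
          exact (HL.union HR).mono (fun z _ => (le_total z b).elim Or.inl Or.inr)
        · -- b < u
          have hdf : HasDerivAt f (v (f u)) u :=
            hf u ⟨by linarith, by linarith⟩
          have hdf' : HasDerivAt θ' (v (f u)) u := by
            refine hdf.congr_of_eventuallyEq ?_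
            filter_upwards [Ioi_mem_nhds hub'] with z hz
            exact hθ'ge z hz.le
          rw [he]
          exact hdf'.hasDerivWithinAt
  -- conclusion
  refine ⟨hpart1, hTne, ?_, hTle, ?_⟩
  · have hble : |θ₀| ^ (2*α) / (2*K*α) ≤ b := by
      rw [div_le_iff₀ hKA, hy0]
      nlinarith [hLlow, hLzero]
    calc ENNReal.ofReal (|θ₀| ^ (2*α) / (2*K*α)) ≤ ENNReal.ofReal b :=
          ENNReal.ofReal_le_ofReal hble
      _ = T := ENNReal.ofReal_toReal hTne
  · have habs0 : Tendsto (fun t => |θ t|) (𝓝[<] b) (𝓝 0) := by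
      have hcontr : ContinuousAt (fun z : ℝ => z ^ (2*α)⁻¹) L :=
        Real.continuousAt_rpow_const L _ (Or.inr (by positivity))
      have h1 : Tendsto (fun t => (y t) ^ (2*α)⁻¹) (𝓝[<] b) (𝓝 (L ^ (2*α)⁻¹)) :=
        hcontr.tendsto.comp hytend
      rw [hLzero, Real.zero_rpow (by positivity : ((2*α)⁻¹ : ℝ) ≠ 0)] at h1
      exact h1.congr hyroot
    refine tendsto_of_tendsto_of_tendsto_of_le_of_le ?_ habs0
      (fun t => neg_abs_le (θ t)) (fun t => le_abs_self (θ t))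
    simpa using habs0.neg
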